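/- Define G(r) := (-1/(4π²)) * (2*I_1(r)*K_1(r) + 2*I_2(r)*K_0(r) - 1) / (I_1(r)² - I_0(r)*I_2(r)) for r > 0. Then G(r) / (-(1/(2π²)) * log r) tends to 1 as r tends to 0 from above. -/

import Mathlib

/-- Modified Bessel function of the first kind of order `k`. -/
noncomputable def besselI (k : ℕ) (x : ℝ) : ℝ :=
  ∑' n : ℕ, (x / 2) ^ (2 * n + k) / (Nat.factorial n * Nat.factorial (n + k))

/-- Modified Bessel function of the second kind of order `k`,
via the integral representation `K_k(x) = ∫_0^∞ e^{-x cosh t} cosh(k t) dt` (valid for `x > 0`). -/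
noncomputable def besselK (k : ℕ) (x : ℝ) : ℝ :=
  ∫ t in Set.Ioi (0 : ℝ), Real.exp (-x * Real.cosh t) * Real.cosh (k * t)

/-- The variance function `G` of the sphere average process. -/
noncomputable def sphereG (r : ℝ) : ℝ :=
  (-(1 / (4 * Real.pi ^ 2))) *
    ((2 * besselI 1 r * besselK 1 r + 2 * besselI 2 r * besselK 0 r - 1) /
      (besselI 1 r ^ 2 - besselI 0 r * besselI 2 r))

/-!
Near `0`, the power series give `I₀ = 1 + O(r²)`, `I₁ = r/2 + O(r³)`, `I₂ = r²/8 + O(r⁴)`, so the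
denominator is `r²/8 + o(r²)`. Splitting the integral for `K₀` at `t = -log r` gives
`K₀(r) = -log r + O(1)`. The substitution `v = r sinh t` turns `1 - r K₁(r)` into
`∫₀^∞ e^{-w} (1 - e^{-s(w)}) dw` with `s(w) = √(r² + w²) - w ≈ r²/(2w)`, whose main contribution
`(r²/2)(-log r)` comes from `r ≤ w ≤ 1`; the rest is `O(r²)`. Hence the numerator is
`(r²/4) log r + O(r²)` and `G(r) = -(1/(2π²)) log r (1 + o(1))`.
-/

open Real MeasureTheory Set Filter Topology Asymptotics
open scoped Nat

lemma summable_besselI_series (k : ℕ) (x : ℝ) :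
    Summable fun n : ℕ => (x / 2) ^ (2 * n + k) / (n ! * (n + k)! : ℝ) := by
  refine Summable.of_norm_bounded
    ((Real.summable_pow_div_factorial ((x / 2) ^ 2)).mul_left (|x / 2| ^ k)) fun n => ?_
  have hfac : (n ! : ℝ) ≤ n ! * (n + k)! :=
    le_mul_of_one_le_right (by positivity) (by exact_mod_cast (n + k).factorial_pos)
  rw [norm_div, norm_pow, Real.norm_eq_abs, Real.norm_of_nonneg (by positivity), mul_div_assoc',
    pow_add, pow_mul, sq_abs, mul_comm]
  exact div_le_div_of_nonneg_left (by positivity) (by positivity) hfac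

lemma besselI_sub_leading_eq_tsum (k : ℕ) (x : ℝ) :
    besselI k x - (x / 2) ^ k / k ! =
      ∑' n : ℕ, (x / 2) ^ (2 * (n + 1) + k) / ((n + 1)! * (n + 1 + k)! : ℝ) := by
  rw [besselI, (summable_besselI_series k x).tsum_eq_zero_add]
  simp

lemma abs_besselI_sub_leading_le (k : ℕ) (x : ℝ) :
    |besselI k x - (x / 2) ^ k / k !| ≤ |x / 2| ^ (k + 2) * exp ((x / 2) ^ 2) := by
  have hexp : HasSum (fun n : ℕ => |x / 2| ^ (k + 2) * (((x / 2) ^ 2) ^ n / n !))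
      (|x / 2| ^ (k + 2) * exp ((x / 2) ^ 2)) := by
    have h := NormedSpace.expSeries_div_hasSum_exp ((x / 2) ^ 2)
    rw [← Real.exp_eq_exp_ℝ] at h
    exact h.mul_left _
  have htail := ((summable_besselI_series k x).comp_injective (add_left_injective 1)).norm
  rw [besselI_sub_leading_eq_tsum, ← Real.norm_eq_abs, ← hexp.tsum_eq]
  refine (norm_tsum_le_tsum_norm htail).trans (htail.tsum_le_tsum (fun n => ?_) hexp.summable)
  have hfac : (n ! : ℝ) ≤ (n + 1)! * (n + 1 + k)! := by
    exact_mod_cast (Nat.factorial_le n.le_succ).trans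
      (Nat.le_mul_of_pos_right _ (Nat.factorial_pos _))
  simp only [Function.comp_apply]
  rw [norm_div, norm_pow, Real.norm_eq_abs, Real.norm_of_nonneg (by positivity), mul_div_assoc',
    show 2 * (n + 1) + k = k + 2 + 2 * n by ring, pow_add, pow_mul, sq_abs]
  exact div_le_div_of_nonneg_left (by positivity) (by positivity) hfac

lemma isBigO_besselI_sub_leading (k : ℕ) :
    (fun x => besselI k x - (x / 2) ^ k / k !) =O[𝓝 0] fun x => x ^ (k + 2) := by
  have hexp : (fun x : ℝ => exp ((x / 2) ^ 2) / 2 ^ (k + 2)) =O[𝓝 0] fun _ => (1 : ℝ) :=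
    ((by fun_prop : Continuous fun x : ℝ => exp ((x / 2) ^ 2) / 2 ^ (k + 2)).tendsto
      0).isBigO_one ℝ
  refine (IsBigO.of_bound' (Eventually.of_forall fun x => ?_)).trans
    (((isBigO_refl (fun x : ℝ => x ^ (k + 2)) _).mul hexp).congr_right fun x => mul_one _)
  rw [Real.norm_eq_abs, Real.norm_eq_abs, abs_mul, abs_of_pos (by positivity : (0 : ℝ) < _ / _)]
  calc |besselI k x - (x / 2) ^ k / k !| ≤ |x / 2| ^ (k + 2) * exp ((x / 2) ^ 2) :=
        abs_besselI_sub_leading_le k x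
    _ = |x ^ (k + 2)| * (exp ((x / 2) ^ 2) / 2 ^ (k + 2)) := by
        rw [abs_div, abs_two, div_pow, abs_pow]; ring

lemma isBigO_mul_inv_pow {f : ℝ → ℝ} {m n : ℕ} (h : f =O[𝓝 0] fun x => x ^ (n + m)) :
    (fun x => f x * (x ^ n)⁻¹) =O[𝓝[≠] 0] fun x => x ^ m := by
  refine ((h.mono nhdsWithin_le_nhds).mul (isBigO_refl (fun x : ℝ => (x ^ n)⁻¹) _)).congr'
    EventuallyEq.rfl ?_
  filter_upwards [self_mem_nhdsWithin] with x (hx : x ≠ 0)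
  rw [pow_add, mul_comm (x ^ n), mul_assoc, mul_inv_cancel₀ (pow_ne_zero n hx), mul_one]

lemma tendsto_besselI_div_pow (k : ℕ) :
    Tendsto (fun x => besselI k x / x ^ k) (𝓝[≠] 0) (𝓝 (1 / (2 ^ k * k !))) := by
  have hsq : Tendsto (fun x : ℝ => x ^ 2) (𝓝[≠] 0) (𝓝 0) :=
    tendsto_nhdsWithin_of_tendsto_nhds (by simpa using (continuous_pow 2).tendsto (0 : ℝ))
  have := ((isBigO_mul_inv_pow (isBigO_besselI_sub_leading k)).trans_tendsto hsq).const_add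
    ((1 : ℝ) / (2 ^ k * k !))
  rw [add_zero] at this
  refine this.congr' ?_
  filter_upwards [self_mem_nhdsWithin] with x (hx : x ≠ 0)
  rw [div_pow]
  field_simp
  ring

lemma besselK_zero_eq (r : ℝ) : besselK 0 r = ∫ t in Ioi 0, exp (-r * cosh t) := by
  simp [besselK]

lemma integrableOn_exp_neg_mul_cosh {r : ℝ} (hr : 0 < r) :
    IntegrableOn (fun t => exp (-r * cosh t)) (Ioi 0) := by
  refine (exp_neg_integrableOn_Ioi 0 hr).mono' (by fun_prop) ?_
  filter_upwards [ae_restrict_mem measurableSet_Ioi] with t ht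
  have hcosh : t ≤ cosh t := (self_le_sinh_iff.2 (le_of_lt ht)).trans (sinh_lt_cosh _).le
  rw [Real.norm_of_nonneg (exp_pos _).le, exp_le_exp]
  nlinarith

lemma besselK_zero_eq_add {r T : ℝ} (hr : 0 < r) (hT : 0 ≤ T) :
    besselK 0 r = (∫ t in 0..T, exp (-r * cosh t)) + ∫ t in Ioi T, exp (-r * cosh t) := by
  have hint := integrableOn_exp_neg_mul_cosh hr
  rw [besselK_zero_eq, intervalIntegral.integral_interval_add_Ioi hint
    (hint.mono_set (Ioi_subset_Ioi hT))]

lemma cosh_le_exp_of_nonneg {t : ℝ} (ht : 0 ≤ t) : cosh t ≤ exp t := by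
  rw [cosh_eq]
  linarith [exp_le_exp.2 (show -t ≤ t by linarith)]

lemma neg_log_sub_one_le_besselK_zero {r : ℝ} (h0 : 0 < r) (h1 : r < 1) :
    -log r - 1 ≤ besselK 0 r := by
  set T := -log r
  have hT : 0 < T := neg_pos.2 (log_neg h0 h1)
  have hrT : r * exp T = 1 := by rw [exp_neg, exp_log h0, mul_inv_cancel₀ h0.ne']
  have hhead : ∫ t in 0..T, (1 - r * exp t) ≤ ∫ t in 0..T, exp (-r * cosh t) := by
    refine intervalIntegral.integral_mono_on hT.le
      (Continuous.intervalIntegrable (by fun_prop) _ _)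
      (Continuous.intervalIntegrable (by fun_prop) _ _) fun t ht => ?_
    have := cosh_le_exp_of_nonneg ht.1
    nlinarith [add_one_le_exp (-r * cosh t)]
  have htail : 0 ≤ ∫ t in Ioi T, exp (-r * cosh t) :=
    setIntegral_nonneg measurableSet_Ioi fun t _ => (exp_pos _).le
  rw [intervalIntegral.integral_sub (Continuous.intervalIntegrable (by fun_prop) _ _)
      (Continuous.intervalIntegrable (by fun_prop) _ _), intervalIntegral.integral_const,
    intervalIntegral.integral_const_mul, integral_exp, exp_zero, smul_eq_mul, mul_one] at hhead
  rw [besselK_zero_eq_add h0 hT.le]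
  nlinarith

lemma two_mul_le_exp {u : ℝ} (hu : 0 ≤ u) : 2 * u ≤ exp u := by
  nlinarith [quadratic_le_exp_of_nonneg hu, sq_nonneg (1 - u)]

lemma besselK_zero_le_neg_log_add_one {r : ℝ} (h0 : 0 < r) (h1 : r < 1) :
    besselK 0 r ≤ -log r + 1 := by
  set T := -log r
  have hT : 0 < T := neg_pos.2 (log_neg h0 h1)
  have hhead : ∫ t in 0..T, exp (-r * cosh t) ≤ ∫ _ in 0..T, (1 : ℝ) := by
    refine intervalIntegral.integral_mono_on hT.le
      (Continuous.intervalIntegrable (by fun_prop) _ _)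
      (Continuous.intervalIntegrable (by fun_prop) _ _) fun t _ => ?_
    rw [exp_le_one_iff]
    nlinarith [cosh_pos t]
  -- beyond `T` the integrand is at most `exp (T - t)`, since `r cosh t ≥ exp (t - T) / 2`
  have htail : ∫ t in Ioi T, exp (-r * cosh t) ≤ ∫ t in Ioi T, exp T * exp (-t) := by
    refine setIntegral_mono_on
      ((integrableOn_exp_neg_mul_cosh h0).mono_set (Ioi_subset_Ioi hT.le))
      ((integrableOn_exp_neg_Ioi T).const_mul _) measurableSet_Ioi fun t ht => ?_
    have hrexp : r * exp t = exp (t - T) := by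
      rw [exp_sub, exp_neg, exp_log h0, div_inv_eq_mul, mul_comm]
    have hcosh : exp t / 2 ≤ cosh t := by rw [cosh_eq]; linarith [exp_pos (-t)]
    have := two_mul_le_exp (sub_nonneg.2 (le_of_lt ht))
    rw [← exp_add, exp_le_exp]
    nlinarith
  rw [integral_const_mul, integral_exp_neg_Ioi, ← exp_add, add_neg_cancel, exp_zero] at htail
  rw [intervalIntegral.integral_const, smul_eq_mul, mul_one, sub_zero] at hhead
  rw [besselK_zero_eq_add h0 hT.le]
  linarith

lemma abs_besselK_zero_add_log_le {r : ℝ} (h0 : 0 < r) (h1 : r < 1) :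
    |besselK 0 r + log r| ≤ 1 :=
  abs_le.2 ⟨by linarith [neg_log_sub_one_le_besselK_zero h0 h1],
    by linarith [besselK_zero_le_neg_log_add_one h0 h1]⟩

lemma image_mul_sinh_Ioi {x : ℝ} (hx : 0 < x) : (fun t => x * sinh t) '' Ioi 0 = Ioi 0 := by
  ext v
  constructor
  · rintro ⟨t, ht, rfl⟩
    exact mul_pos hx (sinh_pos_iff.2 ht)
  · intro hv
    refine ⟨arsinh (v / x), ?_, by simp [sinh_arsinh, mul_div_cancel₀ _ hx.ne']⟩
    simpa using arsinh_strictMono (div_pos hv hx)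

/-- The substitution `v = x sinh t`. -/
lemma integral_exp_neg_sqrt_sq_add_sq {x : ℝ} (hx : 0 < x) :
    ∫ v in Ioi 0, exp (-√(x ^ 2 + v ^ 2)) = x * besselK 1 x := by
  have hsubst := integral_image_eq_integral_abs_deriv_smul (measurableSet_Ioi (a := 0))
    (fun t _ => ((hasDerivAt_sinh t).const_mul x).hasDerivWithinAt)
    (fun a _ b _ h => sinh_injective (mul_left_cancel₀ hx.ne' h))
    fun v => exp (-√(x ^ 2 + v ^ 2))
  rw [image_mul_sinh_Ioi hx] at hsubst
  rw [hsubst, besselK, ← integral_const_mul]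
  refine setIntegral_congr_fun measurableSet_Ioi fun t _ => ?_
  have hsqrt : √(x ^ 2 + (x * sinh t) ^ 2) = x * cosh t := by
    rw [show x ^ 2 + (x * sinh t) ^ 2 = (x * cosh t) ^ 2 by rw [mul_pow, mul_pow, cosh_sq]; ring,
      sqrt_sq (by positivity)]
  simp only [hsqrt, abs_of_pos (mul_pos hx (cosh_pos t)), smul_eq_mul, Nat.cast_one, one_mul]
  ring_nf

lemma integrableOn_exp_neg_sqrt_sq_add_sq (x : ℝ) :
    IntegrableOn (fun v => exp (-√(x ^ 2 + v ^ 2))) (Ioi 0) := by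
  refine (integrableOn_exp_neg_Ioi 0).mono' (by fun_prop) ?_
  filter_upwards [ae_restrict_mem measurableSet_Ioi] with v hv
  rw [Real.norm_of_nonneg (exp_pos _).le, exp_le_exp, neg_le_neg_iff]
  exact le_sqrt_of_sq_le (by nlinarith)

noncomputable def hypotExcess (x w : ℝ) : ℝ := √(x ^ 2 + w ^ 2) - w

lemma hypotExcess_nonneg (x w : ℝ) : 0 ≤ hypotExcess x w :=
  sub_nonneg.2 ((le_abs_self w).trans (abs_le_sqrt (by nlinarith)))

lemma hypotExcess_mul_sqrt_add (x w : ℝ) :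
    hypotExcess x w * (√(x ^ 2 + w ^ 2) + w) = x ^ 2 := by
  rw [hypotExcess]
  linear_combination sq_sqrt (show 0 ≤ x ^ 2 + w ^ 2 by positivity)

lemma hypotExcess_le {x w : ℝ} (hx : 0 ≤ x) (hw : 0 ≤ w) : hypotExcess x w ≤ x := by
  rw [hypotExcess, sub_le_iff_le_add, sqrt_le_left (by positivity)]
  nlinarith

lemma hypotExcess_le_div {x w : ℝ} (hw : 0 < w) : hypotExcess x w ≤ x ^ 2 / (2 * w) := by
  rw [le_div_iff₀ (by positivity), ← hypotExcess_mul_sqrt_add x w]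
  gcongr
  · exact hypotExcess_nonneg x w
  · linarith [le_sqrt_of_sq_le (show w ^ 2 ≤ x ^ 2 + w ^ 2 by nlinarith)]

lemma div_le_hypotExcess {x w : ℝ} (hx : 0 < x) (hw : 0 ≤ w) :
    x ^ 2 / (x + 2 * w) ≤ hypotExcess x w := by
  rw [div_le_iff₀ (by positivity), ← hypotExcess_mul_sqrt_add x w]
  refine mul_le_mul_of_nonneg_left ?_ (hypotExcess_nonneg x w)
  linarith [hypotExcess_le hx.le hw, show hypotExcess x w = √(x ^ 2 + w ^ 2) - w from rfl]

/-- `1 - x K₁(x)` in the integral form given by `besselKDefect_eq`. -/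
noncomputable def besselKDefect (x : ℝ) : ℝ :=
  ∫ w in Ioi 0, exp (-w) * (1 - exp (-hypotExcess x w))

lemma exp_neg_mul_one_sub_exp_neg_hypotExcess (x w : ℝ) :
    exp (-w) * (1 - exp (-hypotExcess x w)) = exp (-w) - exp (-√(x ^ 2 + w ^ 2)) := by
  rw [mul_one_sub, ← exp_add, hypotExcess]
  ring_nf

lemma integrableOn_besselKDefect_integrand (x : ℝ) :
    IntegrableOn (fun w => exp (-w) * (1 - exp (-hypotExcess x w))) (Ioi 0) := by
  simp_rw [exp_neg_mul_one_sub_exp_neg_hypotExcess]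
  exact (integrableOn_exp_neg_Ioi 0).sub (integrableOn_exp_neg_sqrt_sq_add_sq x)

lemma besselKDefect_eq {x : ℝ} (hx : 0 < x) : besselKDefect x = 1 - x * besselK 1 x := by
  simp_rw [besselKDefect, exp_neg_mul_one_sub_exp_neg_hypotExcess]
  rw [integral_sub (integrableOn_exp_neg_Ioi 0) (integrableOn_exp_neg_sqrt_sq_add_sq x),
    integral_exp_neg_Ioi_zero, integral_exp_neg_sqrt_sq_add_sq hx]

lemma besselKDefect_eq_add (x : ℝ) {a : ℝ} (ha : 0 ≤ a) :
    besselKDefect x = (∫ w in 0..a, exp (-w) * (1 - exp (-hypotExcess x w))) +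
      ∫ w in Ioi a, exp (-w) * (1 - exp (-hypotExcess x w)) := by
  have hint := integrableOn_besselKDefect_integrand x
  rw [besselKDefect, intervalIntegral.integral_interval_add_Ioi hint
    (hint.mono_set (Ioi_subset_Ioi ha))]

@[fun_prop]
lemma continuous_hypotExcess (x : ℝ) : Continuous (hypotExcess x) := by
  unfold hypotExcess
  fun_prop

lemma besselKDefect_integrand_le (x w : ℝ) :
    exp (-w) * (1 - exp (-hypotExcess x w)) ≤ exp (-w) * hypotExcess x w :=
  mul_le_mul_of_nonneg_left (by linarith [add_one_le_exp (-hypotExcess x w)]) (exp_pos _).le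

lemma sub_sq_le_besselKDefect_integrand (x : ℝ) {w : ℝ} (hw : 0 ≤ w) :
    hypotExcess x w - x ^ 2 ≤ exp (-w) * (1 - exp (-hypotExcess x w)) := by
  set s := hypotExcess x w
  have hs := hypotExcess_nonneg x w
  have hsqrt : w + s = √(x ^ 2 + w ^ 2) := by simp [s, hypotExcess]
  have hexp_s : exp (-s) * (1 + s) ≤ 1 := by
    calc exp (-s) * (1 + s) ≤ exp (-s) * exp s := by
          gcongr; linarith [add_one_le_exp s]
      _ = 1 := by rw [← exp_add, neg_add_cancel, exp_zero]
  calc s - x ^ 2 = s - s * (√(x ^ 2 + w ^ 2) + w) := by rw [hypotExcess_mul_sqrt_add]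
    _ ≤ (1 - (w + s)) * s := by rw [← hsqrt]; nlinarith
    _ ≤ exp (-(w + s)) * s := by gcongr; linarith [add_one_le_exp (-(w + s))]
    _ = exp (-w) * (exp (-s) * s) := by rw [neg_add, exp_add]; ring
    _ ≤ exp (-w) * (1 - exp (-s)) := by gcongr; linarith

lemma besselKDefect_le {x : ℝ} (h0 : 0 < x) (h1 : x ≤ 1) :
    besselKDefect x ≤ x ^ 2 / 2 * -log x + 2 * x ^ 2 := by
  set f := fun w => exp (-w) * (1 - exp (-hypotExcess x w))
  have hf : Continuous f := by fun_prop
  have hnear : ∫ w in 0..x, f w ≤ ∫ _ in 0..x, x :=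
    intervalIntegral.integral_mono_on h0.le (hf.intervalIntegrable _ _)
      intervalIntegrable_const fun w hw => (besselKDefect_integrand_le x w).trans <|
        (mul_le_of_le_one_left (hypotExcess_nonneg x w)
          (exp_le_one_iff.2 (neg_nonpos.2 hw.1))).trans (hypotExcess_le h0.le hw.1)
  have hmid : ∫ w in x..1, f w ≤ ∫ w in x..1, x ^ 2 / 2 * w⁻¹ := by
    refine intervalIntegral.integral_mono_on h1 (hf.intervalIntegrable _ _)
      ((continuousOn_const.mul (continuousOn_inv₀.mono fun w hw => (h0.trans_le hw.1).ne'))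
        |>.intervalIntegrable_of_Icc h1) fun w hw => ?_
    have hw0 : 0 < w := h0.trans_le hw.1
    refine (besselKDefect_integrand_le x w).trans ?_
    calc exp (-w) * hypotExcess x w ≤ 1 * (x ^ 2 / (2 * w)) :=
          mul_le_mul (exp_le_one_iff.2 (by linarith)) (hypotExcess_le_div hw0)
            (hypotExcess_nonneg x w) zero_le_one
      _ = x ^ 2 / 2 * w⁻¹ := by field_simp
  have hfar : ∫ w in Ioi 1, f w ≤ ∫ w in Ioi 1, x ^ 2 / 2 * exp (-w) := by
    refine setIntegral_mono_on ((integrableOn_besselKDefect_integrand x).mono_set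
      (Ioi_subset_Ioi zero_le_one)) ((integrableOn_exp_neg_Ioi 1).const_mul _)
      measurableSet_Ioi fun w hw => (besselKDefect_integrand_le x w).trans ?_
    have hw0 : (0 : ℝ) < w := one_pos.trans hw
    have : hypotExcess x w ≤ x ^ 2 / 2 := (hypotExcess_le_div hw0).trans
      (div_le_div_of_nonneg_left (sq_nonneg x) two_pos (by linarith [mem_Ioi.1 hw]))
    nlinarith [exp_pos (-w)]
  rw [intervalIntegral.integral_const, smul_eq_mul, sub_zero] at hnear
  rw [intervalIntegral.integral_const_mul, integral_inv_of_pos h0 one_pos, one_div,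
    log_inv] at hmid
  rw [integral_const_mul, integral_exp_neg_Ioi] at hfar
  have : exp (-1) ≤ 1 := exp_le_one_iff.2 (by norm_num)
  rw [besselKDefect_eq_add x zero_le_one,
    ← intervalIntegral.integral_add_adjacent_intervals (b := x) (hf.intervalIntegrable _ _)
      (hf.intervalIntegrable _ _)]
  nlinarith

lemma neg_log_sub_le_besselKDefect {x : ℝ} (h0 : 0 < x) :
    x ^ 2 / 2 * -log x - x ^ 2 ≤ besselKDefect x := by
  set f := fun w => exp (-w) * (1 - exp (-hypotExcess x w))
  have hf : Continuous f := by fun_prop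
  have hg : IntervalIntegrable (fun w => x ^ 2 * (x + 2 * w)⁻¹) volume 0 1 :=
    (continuousOn_const.mul (ContinuousOn.inv₀ (by fun_prop) fun w hw => by
      linarith [hw.1])).intervalIntegrable_of_Icc zero_le_one
  have hnear : ∫ w in (0 : ℝ)..1, (x ^ 2 * (x + 2 * w)⁻¹ - x ^ 2) ≤ ∫ w in (0 : ℝ)..1, f w := by
    refine intervalIntegral.integral_mono_on zero_le_one (hg.sub intervalIntegrable_const)
      (hf.intervalIntegrable _ _) fun w hw => ?_
    rw [← div_eq_mul_inv]
    linarith [div_le_hypotExcess h0 hw.1, sub_sq_le_besselKDefect_integrand x hw.1]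
  have hfar : 0 ≤ ∫ w in Ioi 1, f w := setIntegral_nonneg measurableSet_Ioi fun w _ =>
    mul_nonneg (exp_pos _).le (sub_nonneg.2 (exp_le_one_iff.2 (neg_nonpos.2
      (hypotExcess_nonneg x w))))
  have hlog : ∫ w in (0 : ℝ)..1, (x + 2 * w)⁻¹ = 2⁻¹ * (log (x + 2) - log x) := by
    rw [intervalIntegral.integral_comp_add_mul (fun u => u⁻¹) two_ne_zero, mul_zero, add_zero,
      mul_one, integral_inv_of_pos h0 (by linarith), log_div (by linarith) h0.ne', smul_eq_mul]
  rw [intervalIntegral.integral_sub hg intervalIntegrable_const,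
    intervalIntegral.integral_const_mul, hlog, intervalIntegral.integral_const, smul_eq_mul,
    sub_zero, one_mul] at hnear
  have : 0 ≤ log (x + 2) := log_nonneg (by linarith)
  rw [besselKDefect_eq_add x zero_le_one]
  nlinarith

lemma tendsto_div_of_isBigO_sub {α : Type*} {l : Filter α} {f g : α → ℝ} {a : ℝ}
    (hg : Tendsto g l atBot) (h : (fun x => f x - a * g x) =O[l] fun _ => (1 : ℝ)) :
    Tendsto (fun x => f x / g x) l (𝓝 a) := by
  have hsmall : Tendsto (fun x => (f x - a * g x) * (g x)⁻¹) l (𝓝 0) :=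
    ((h.mul (isBigO_refl (fun x => (g x)⁻¹) l)).congr_right fun x => one_mul _).trans_tendsto
      (tendsto_inv_atBot_zero.comp hg)
  have := hsmall.const_add a
  rw [add_zero] at this
  refine this.congr' ?_
  filter_upwards [hg.eventually_ne_atBot 0] with x hx
  field_simp
  ring

lemma eventually_mem_Ioo_nhdsGT : ∀ᶠ x : ℝ in 𝓝[>] 0, x ∈ Ioo 0 1 :=
  Ioo_mem_nhdsGT one_pos

lemma tendsto_besselK_zero_div_log :
    Tendsto (fun x => besselK 0 x / log x) (𝓝[>] 0) (𝓝 (-1)) := by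
  refine tendsto_div_of_isBigO_sub tendsto_log_nhdsGT_zero (IsBigO.of_bound 1 ?_)
  filter_upwards [eventually_mem_Ioo_nhdsGT] with x hx
  simpa using abs_besselK_zero_add_log_le hx.1 hx.2

lemma tendsto_besselKDefect_div_sq_div_log :
    Tendsto (fun x => besselKDefect x / x ^ 2 / log x) (𝓝[>] 0) (𝓝 (-1 / 2)) := by
  refine tendsto_div_of_isBigO_sub tendsto_log_nhdsGT_zero (IsBigO.of_bound 2 ?_)
  filter_upwards [eventually_mem_Ioo_nhdsGT] with x hx
  have hlow := neg_log_sub_le_besselKDefect hx.1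
  have hupp := besselKDefect_le hx.1 hx.2.le
  have hx2 : 0 < x ^ 2 := pow_pos hx.1 2
  rw [Real.norm_eq_abs, norm_one, mul_one, abs_le, le_sub_iff_add_le, sub_le_iff_le_add,
    le_div_iff₀ hx2, div_le_iff₀ hx2]
  constructor <;> nlinarith

lemma tendsto_besselI_one_remainder_div_log :
    Tendsto (fun x => (2 * (besselI 1 x / x) - 1) / x ^ 2 / log x) (𝓝[>] 0) (𝓝 0) := by
  refine tendsto_div_of_isBigO_sub tendsto_log_nhdsGT_zero ?_
  have h :=
    (isBigO_mul_inv_pow (m := 0) (n := 3) (isBigO_besselI_sub_leading 1)).const_mul_left 2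
  refine ((h.mono (nhdsGT_le_nhdsNE 0)).congr' ?_ (by simp))
  filter_upwards [self_mem_nhdsWithin] with x (hx : 0 < x)
  field_simp
  ring

lemma tendsto_besselI_one_div : Tendsto (fun x => besselI 1 x / x) (𝓝[>] 0) (𝓝 (1 / 2)) := by
  simpa using (tendsto_besselI_div_pow 1).mono_left (nhdsGT_le_nhdsNE 0)

lemma tendsto_besselI_two_div_sq :
    Tendsto (fun x => besselI 2 x / x ^ 2) (𝓝[>] 0) (𝓝 (1 / 8)) := by
  convert (tendsto_besselI_div_pow 2).mono_left (nhdsGT_le_nhdsNE 0) using 2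
  norm_num [Nat.factorial]

lemma tendsto_sphereG_numerator :
    Tendsto (fun x => (2 * besselI 1 x * besselK 1 x + 2 * besselI 2 x * besselK 0 x - 1) /
      x ^ 2 / log x) (𝓝[>] 0) (𝓝 (1 / 4)) := by
  have h := (tendsto_besselI_one_remainder_div_log.sub
    ((tendsto_besselI_one_div.const_mul 2).mul tendsto_besselKDefect_div_sq_div_log)).add
    ((tendsto_besselI_two_div_sq.const_mul 2).mul tendsto_besselK_zero_div_log)
  norm_num at h
  refine h.congr' ?_
  filter_upwards [eventually_mem_Ioo_nhdsGT] with x hx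
  have hx0 : x ≠ 0 := hx.1.ne'
  have hlog : log x ≠ 0 := (log_neg hx.1 hx.2).ne
  rw [besselKDefect_eq hx.1]
  field_simp
  ring

lemma tendsto_sphereG_denominator :
    Tendsto (fun x => (besselI 1 x ^ 2 - besselI 0 x * besselI 2 x) / x ^ 2) (𝓝[>] 0)
      (𝓝 (1 / 8)) := by
  have hI0 : Tendsto (besselI 0) (𝓝[>] 0) (𝓝 1) := by
    simpa using (tendsto_besselI_div_pow 0).mono_left (nhdsGT_le_nhdsNE 0)
  have h := (tendsto_besselI_one_div.pow 2).sub (hI0.mul tendsto_besselI_two_div_sq)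
  norm_num at h
  refine h.congr' ?_
  filter_upwards [self_mem_nhdsWithin] with x (hx : 0 < x)
  field_simp

theorem sphereG_asymptotic :
    Filter.Tendsto (fun r : ℝ => sphereG r / (-(1 / (2 * Real.pi ^ 2)) * Real.log r))
      (nhdsWithin 0 (Set.Ioi 0)) (nhds 1) := by
  have h := (tendsto_sphereG_numerator.div tendsto_sphereG_denominator (by norm_num)).const_mul
    (1 / 2)
  norm_num at h
  refine h.congr' ?_
  filter_upwards [eventually_mem_Ioo_nhdsGT,
    tendsto_sphereG_denominator.eventually_ne (by norm_num : (1 / 8 : ℝ) ≠ 0)] with x hx hD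
  have hx0 : x ≠ 0 := hx.1.ne'
  have hlog : log x ≠ 0 := (log_neg hx.1 hx.2).ne
  have hD' : besselI 1 x ^ 2 - besselI 0 x * besselI 2 x ≠ 0 := by
    rintro h0
    simp [h0] at hD
  rw [sphereG]
  field_simp
  ring
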